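/- arXiv:1412.4155 — 2 statements merged into one kernel-verified Lean document; each statement's English description precedes it below -/
import Mathlib

section
/- Let H be an n×n heptadiagonal matrix (n > 4) with g_i ≠ 0 for 1 ≤ i ≤ n-3, g_{n-2} = g_{n-1} = g_n = 1, f_{n-1} = f_n = e_n = 0, and suppose X_{n+1} ≠ 0. Then H is invertible, and the last column of H⁻¹ is C_n = (-Z_1/Z_{n+3}, -Z_2/Z_{n+3}, …, -Z_n/Z_{n+3})ᵗ, i.e., (H⁻¹)_{i,n} = -Z_i/Z_{n+3} for all 1 ≤ i ≤ n. -/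
open Matrix

/-- The `n × n` heptadiagonal matrix of (1.1), with 1-indexed diagonal sequences
`a, b, c, d, e, f, g : ℤ → ℝ` (entry `H i j` with `i, j : Fin n` corresponds to
row `i+1`, column `j+1` in the paper's indexing). -/
def heptaMatrix (n : ℕ) (a b c d e f g : ℤ → ℝ) : Matrix (Fin n) (Fin n) ℝ :=
  fun i j =>
    if ((j : ℤ) + 1) = ((i : ℤ) + 1) - 3 then a ((i : ℤ) + 1)
    else if ((j : ℤ) + 1) = ((i : ℤ) + 1) - 2 then b ((i : ℤ) + 1)
    else if ((j : ℤ) + 1) = ((i : ℤ) + 1) - 1 then c ((i : ℤ) + 1)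
    else if ((j : ℤ) + 1) = ((i : ℤ) + 1) then d ((i : ℤ) + 1)
    else if ((j : ℤ) + 1) = ((i : ℤ) + 1) + 1 then e ((i : ℤ) + 1)
    else if ((j : ℤ) + 1) = ((i : ℤ) + 1) + 2 then f ((i : ℤ) + 1)
    else if ((j : ℤ) + 1) = ((i : ℤ) + 1) + 3 then g ((i : ℤ) + 1)
    else 0

/-- `W : ℤ → ℝ` satisfies the seven-term recurrence
`aᵢ W_{i-3} + bᵢ W_{i-2} + cᵢ W_{i-1} + dᵢ Wᵢ + eᵢ W_{i+1} + fᵢ W_{i+2} + gᵢ W_{i+3} = 0`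
for `1 ≤ i ≤ n`, with out-of-range terms (index `≤ 0`) treated as zero. -/
def SevenTermRec (n : ℕ) (a b c d e f g : ℤ → ℝ) (W : ℤ → ℝ) : Prop :=
  (∀ j : ℤ, j ≤ 0 → W j = 0) ∧
  (∀ i : ℤ, 1 ≤ i → i ≤ (n : ℤ) →
    a i * W (i - 3) + b i * W (i - 2) + c i * W (i - 1) + d i * W i +
      e i * W (i + 1) + f i * W (i + 2) + g i * W (i + 3) = 0)

/-- The `k`-th standard basis vector of `ℝⁿ` (1-indexed `k`). -/
def stdBasis (n : ℕ) (k : ℤ) : Fin n → ℝ := fun i => if ((i : ℤ) + 1) = k then 1 else 0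

/-- The 3×3 determinant with rows formed from `A`, `B`, `C` at indices `p`, `q`, `r`. -/
def det3 (A B C : ℤ → ℝ) (p q r : ℤ) : ℝ :=
  Matrix.det !![A p, A q, A r; B p, B q, B r; C p, C q, C r]

/-- The `k`-th column (1-indexed, `1 ≤ k ≤ n`) of a matrix, as a vector; `0` out of range. -/
def matCol (n : ℕ) (M : Matrix (Fin n) (Fin n) ℝ) (k : ℤ) : Fin n → ℝ :=
  fun i => if hk : 1 ≤ k ∧ k ≤ (n : ℤ) then M i ⟨(k - 1).toNat, by omega⟩ else 0


/-! The solutions of the recurrence form a vector space, and since `gᵢ ≠ 0` for `1 ≤ i ≤ n`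
a solution is determined on `j ≤ n + 3` by its values at `1, 2, 3`; there it equals
`W₃ A + W₂ B + W₁ C`. A vector in the kernel of `H`, extended by zero, is such a solution that
vanishes at `n + 1, n + 2, n + 3`; as `X_{n+1} ≠ 0` its three coefficients vanish, so `H` is
invertible. Expanding along the first column, `Zⱼ = det3 A B C j (n+1) (n+2)` is also a solution,
and it vanishes at `n + 1` and `n + 2`. Hence applying `H` to `(Z₁, …, Zₙ)` only loses the term
`gₙ Z_{n+3}` of the last row: `H Z = -Z_{n+3} eₙ`. -/

theorem Matrix.inv_apply_mul_of_mulVec_eq_single {ι R : Type*} [Fintype ι] [DecidableEq ι]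
    [CommRing R] {M : Matrix ι ι R} (hM : IsUnit M.det) {w : ι → R} {k : ι} {y : R}
    (h : M *ᵥ w = Pi.single k y) (i : ι) : M⁻¹ i k * y = w i := by
  have hw := congr_arg (M⁻¹ *ᵥ ·) h
  simp only [mulVec_mulVec, nonsing_inv_mul _ hM, one_mulVec] at hw
  rw [hw]
  simp [mulVec_single]

section Det3

variable (A B C : ℤ → ℝ)

theorem det3_eq (p q r : ℤ) :
    det3 A B C p q r = A p * (B q * C r - B r * C q) - B p * (A q * C r - A r * C q)
      + C p * (A q * B r - A r * B q) := by
  simp [det3, det_fin_three]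
  ring

theorem det3_rotate (p q r : ℤ) : det3 A B C r p q = det3 A B C p q r := by
  rw [det3_eq, det3_eq]; ring

theorem det3_self_left (q r : ℤ) : det3 A B C q q r = 0 := by
  rw [det3_eq]; ring

theorem det3_self_right (q r : ℤ) : det3 A B C r q r = 0 := by
  rw [det3_eq]; ring

variable {A B C}

theorem eq_zero_of_det3_ne_zero {p q r : ℤ} {x y z : ℝ} (hdet : det3 A B C p q r ≠ 0)
    (hp : x * A p + y * B p + z * C p = 0) (hq : x * A q + y * B q + z * C q = 0)
    (hr : x * A r + y * B r + z * C r = 0) : x = 0 ∧ y = 0 ∧ z = 0 := by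
  have h := eq_zero_of_vecMul_eq_zero hdet (v := ![x, y, z]) <| by
    ext k; fin_cases k <;> simpa [vecMul, dotProduct, Fin.sum_univ_three]
  exact ⟨congr_fun h 0, congr_fun h 1, congr_fun h 2⟩

end Det3

def sevenTerm (a b c d e f g W : ℤ → ℝ) (i : ℤ) : ℝ :=
  a i * W (i - 3) + b i * W (i - 2) + c i * W (i - 1) + d i * W i +
    e i * W (i + 1) + f i * W (i + 2) + g i * W (i + 3)

def heptaSolutions (n : ℕ) (a b c d e f g : ℤ → ℝ) : Submodule ℝ (ℤ → ℝ) where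
  carrier := {W | SevenTermRec n a b c d e f g W}
  zero_mem' := ⟨fun _ _ => rfl, fun _ _ _ => by simp⟩
  add_mem' := fun {W V} hW hV =>
    ⟨fun j hj => by simp [hW.1 j hj, hV.1 j hj], fun i h1 h2 => by
      simp only [Pi.add_apply]
      linear_combination hW.2 i h1 h2 + hV.2 i h1 h2⟩
  smul_mem' := fun r W hW =>
    ⟨fun j hj => by simp [hW.1 j hj], fun i h1 h2 => by
      simp only [Pi.smul_apply, smul_eq_mul]
      linear_combination r * hW.2 i h1 h2⟩

section Recurrence

variable {n : ℕ} {a b c d e f g W : ℤ → ℝ}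

theorem SevenTermRec.eq_zero_of_init (hg : ∀ i : ℤ, 1 ≤ i → i ≤ n → g i ≠ 0)
    (hW : SevenTermRec n a b c d e f g W) (h1 : W 1 = 0) (h2 : W 2 = 0) (h3 : W 3 = 0) :
    ∀ j : ℤ, j ≤ n + 3 → W j = 0 := by
  have step (j : ℤ) (hj : j ≤ n + 3) (below : ∀ i < j, W i = 0) : W j = 0 := by
    by_cases hj3 : j ≤ 3
    · obtain h | rfl | rfl | rfl : j ≤ 0 ∨ j = 1 ∨ j = 2 ∨ j = 3 := by omega
      exacts [hW.1 j h, h1, h2, h3]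
    · have hrec := hW.2 (j - 3) (by omega) (by omega)
      simp only [below (j - 3 - 3) (by omega), below (j - 3 - 2) (by omega),
        below (j - 3 - 1) (by omega), below (j - 3) (by omega), below (j - 3 + 1) (by omega),
        below (j - 3 + 2) (by omega), sub_add_cancel, mul_zero, zero_add] at hrec
      exact (mul_eq_zero.mp hrec).resolve_left (hg _ (by omega) (by omega))
  have bounded (k : ℕ) : ∀ j : ℤ, j ≤ n + 3 → j < k → W j = 0 := by
    induction k with
    | zero => exact fun j _ hj => hW.1 j (by omega)
    | succ k ih =>
      intro j hj hjk
      by_cases hlt : j < k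
      · exact ih j hj hlt
      · exact step j hj fun i hi => ih i (by omega) (by omega)
  exact fun j hj => bounded (n + 4) j hj (by omega)

end Recurrence

section HeptaMatrix

variable {n : ℕ} {a b c d e f g : ℤ → ℝ}

theorem Fin.exists_coe_add_one_eq {m : ℤ} (h1 : 1 ≤ m) (h2 : m ≤ n) :
    ∃ k : Fin n, (k : ℤ) + 1 = m :=
  ⟨⟨(m - 1).toNat, by omega⟩, by simp; omega⟩

theorem Fin.sum_ite_coe_add_one_eq (m : ℤ) (y : ℝ) :
    ∑ j : Fin n, (if (j : ℤ) + 1 = m then y else 0) = if 1 ≤ m ∧ m ≤ n then y else 0 := by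
  split_ifs with hm
  · obtain ⟨k, rfl⟩ := Fin.exists_coe_add_one_eq hm.1 hm.2
    exact (Finset.sum_eq_single k (fun j _ hj => if_neg fun h => hj (by ext; omega))
      (by simp)).trans (if_pos rfl)
  · exact Finset.sum_eq_zero fun j _ => if_neg fun h => hm (by omega)

theorem heptaMatrix_apply_mul (W : ℤ → ℝ) (i j : Fin n) :
    heptaMatrix n a b c d e f g i j * W ((j : ℤ) + 1) =
      (if (j : ℤ) + 1 = (i + 1) - 3 then a (i + 1) * W ((i + 1) - 3) else 0)
      + (if (j : ℤ) + 1 = (i + 1) - 2 then b (i + 1) * W ((i + 1) - 2) else 0)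
      + (if (j : ℤ) + 1 = (i + 1) - 1 then c (i + 1) * W ((i + 1) - 1) else 0)
      + (if (j : ℤ) + 1 = i + 1 then d (i + 1) * W (i + 1) else 0)
      + (if (j : ℤ) + 1 = (i + 1) + 1 then e (i + 1) * W ((i + 1) + 1) else 0)
      + (if (j : ℤ) + 1 = (i + 1) + 2 then f (i + 1) * W ((i + 1) + 2) else 0)
      + (if (j : ℤ) + 1 = (i + 1) + 3 then g (i + 1) * W ((i + 1) + 3) else 0) := by
  unfold heptaMatrix
  split_ifs with h1 h2 h3 h4 h5 h6 h7 <;> first | omega | simp [*]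

theorem heptaMatrix_mulVec_apply {W : ℤ → ℝ} (hW0 : ∀ j : ℤ, j ≤ 0 → W j = 0)
    (hW1 : W (n + 1) = 0) (hW2 : W (n + 2) = 0) (i : Fin n) :
    (heptaMatrix n a b c d e f g *ᵥ fun j => W ((j : ℤ) + 1)) i =
      sevenTerm a b c d e f g W (i + 1) - if (i : ℤ) + 1 = n then g n * W (n + 3) else 0 := by
  have hi := i.isLt
  have key (m : ℤ) (hm : m ≤ 0 ∨ m = n + 1 ∨ m = n + 2 ∨ (1 ≤ m ∧ m ≤ n)) (x : ℝ) :
      (if 1 ≤ m ∧ m ≤ n then x * W m else 0) = x * W m := by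
    split_ifs with h
    · rfl
    · obtain hm | rfl | rfl | hm := hm <;> simp_all
  simp only [mulVec, dotProduct, heptaMatrix_apply_mul, Finset.sum_add_distrib,
    Fin.sum_ite_coe_add_one_eq, sevenTerm]
  simp (disch := omega) only [key]
  obtain hlast | hlast := eq_or_ne ((i : ℤ) + 1) n
  · rw [if_neg (by omega), if_pos hlast, hlast]
    ring
  · rw [if_neg hlast, key _ (by omega)]
    ring

end HeptaMatrix

noncomputable def zeroExtend {n : ℕ} (v : Fin n → ℝ) : ℤ → ℝ :=
  Function.extend (fun j : Fin n => (j : ℤ) + 1) v 0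

theorem zeroExtend_coe_add_one {n : ℕ} (v : Fin n → ℝ) (j : Fin n) :
    zeroExtend v ((j : ℤ) + 1) = v j :=
  Function.Injective.extend_apply (fun j k h => by ext; simpa using h) v (0 : ℤ → ℝ) j

theorem zeroExtend_of_not_mem {n : ℕ} {v : Fin n → ℝ} {m : ℤ} (hm : m ≤ 0 ∨ n < m) :
    zeroExtend v m = 0 :=
  Function.extend_apply' _ _ _ (by rintro ⟨j, rfl⟩; omega)

section Fundamental

variable {n : ℕ} {a b c d e f g A B C : ℤ → ℝ}

theorem SevenTermRec.eq_fundamental_comb {W : ℤ → ℝ} (hg : ∀ i : ℤ, 1 ≤ i → i ≤ n → g i ≠ 0)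
    (hA : SevenTermRec n a b c d e f g A) (hA1 : A 1 = 0) (hA2 : A 2 = 0) (hA3 : A 3 = 1)
    (hB : SevenTermRec n a b c d e f g B) (hB1 : B 1 = 0) (hB2 : B 2 = 1) (hB3 : B 3 = 0)
    (hC : SevenTermRec n a b c d e f g C) (hC1 : C 1 = 1) (hC2 : C 2 = 0) (hC3 : C 3 = 0)
    (hW : SevenTermRec n a b c d e f g W) :
    ∀ j : ℤ, j ≤ n + 3 → W j = W 3 * A j + W 2 * B j + W 1 * C j := by
  have hD : W - (W 3 • A + W 2 • B + W 1 • C) ∈ heptaSolutions n a b c d e f g :=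
    sub_mem hW (add_mem (add_mem (Submodule.smul_mem _ _ hA) (Submodule.smul_mem _ _ hB))
      (Submodule.smul_mem _ _ hC))
  intro j hj
  have := SevenTermRec.eq_zero_of_init hg hD (by simp [*]) (by simp [*]) (by simp [*]) j hj
  simpa [sub_eq_zero] using this

theorem SevenTermRec.zeroExtend_of_mulVec_eq_zero {v : Fin n → ℝ}
    (hv : heptaMatrix n a b c d e f g *ᵥ v = 0) : SevenTermRec n a b c d e f g (zeroExtend v) := by
  refine ⟨fun j hj => zeroExtend_of_not_mem (.inl hj), fun i h1 h2 => ?_⟩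
  obtain ⟨k, rfl⟩ := Fin.exists_coe_add_one_eq h1 h2
  have hout (m : ℤ) (hm : n < m) : zeroExtend v m = 0 := zeroExtend_of_not_mem (.inr hm)
  have := heptaMatrix_mulVec_apply (a := a) (b := b) (c := c) (d := d) (e := e) (f := f)
    (g := g) (fun j hj => zeroExtend_of_not_mem (.inl hj)) (hout _ (by omega)) (hout _ (by omega)) k
  simp only [zeroExtend_coe_add_one, hv, hout (n + 3) (by omega)] at this
  simpa [sevenTerm] using this.symm

theorem heptaMatrix_det_ne_zero (hg : ∀ i : ℤ, 1 ≤ i → i ≤ n → g i ≠ 0)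
    (hA : SevenTermRec n a b c d e f g A) (hA1 : A 1 = 0) (hA2 : A 2 = 0) (hA3 : A 3 = 1)
    (hB : SevenTermRec n a b c d e f g B) (hB1 : B 1 = 0) (hB2 : B 2 = 1) (hB3 : B 3 = 0)
    (hC : SevenTermRec n a b c d e f g C) (hC1 : C 1 = 1) (hC2 : C 2 = 0) (hC3 : C 3 = 0)
    (hX : det3 A B C (n + 1) (n + 2) (n + 3) ≠ 0) :
    (heptaMatrix n a b c d e f g).det ≠ 0 := by
  intro hdet
  obtain ⟨v, hv0, hv⟩ := exists_mulVec_eq_zero_iff.mpr hdet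
  have hV := SevenTermRec.eq_fundamental_comb hg hA hA1 hA2 hA3 hB hB1 hB2 hB3 hC hC1 hC2 hC3
    (SevenTermRec.zeroExtend_of_mulVec_eq_zero hv)
  have tail (m : ℤ) (h1 : n < m) (h2 : m ≤ n + 3) :
      zeroExtend v 3 * A m + zeroExtend v 2 * B m + zeroExtend v 1 * C m = 0 := by
    rw [← hV m h2, zeroExtend_of_not_mem (.inr h1)]
  obtain ⟨h3, h2, h1⟩ := eq_zero_of_det3_ne_zero hX (tail _ (by omega) (by omega))
    (tail _ (by omega) (by omega)) (tail _ (by omega) (by omega))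
  refine hv0 (funext fun j => ?_)
  rw [← zeroExtend_coe_add_one v, hV _ (by omega), h1, h2, h3]
  simp

theorem det3_mem_heptaSolutions (hA : A ∈ heptaSolutions n a b c d e f g) (hB : B ∈ heptaSolutions n a b c d e f g)
    (hC : C ∈ heptaSolutions n a b c d e f g) (q r : ℤ) :
    (fun p => det3 A B C p q r) ∈ heptaSolutions n a b c d e f g := by
  have expand : (fun p => det3 A B C p q r) = (B q * C r - B r * C q) • A
      - (A q * C r - A r * C q) • B + (A q * B r - A r * B q) • C := by
    funext p
    simp only [det3_eq, Pi.add_apply, Pi.sub_apply, Pi.smul_apply, smul_eq_mul]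
    ring
  rw [expand]
  exact add_mem (sub_mem (Submodule.smul_mem _ _ hA) (Submodule.smul_mem _ _ hB))
    (Submodule.smul_mem _ _ hC)

theorem heptaMatrix_mulVec_det3 (hn : 0 < n) (hA : SevenTermRec n a b c d e f g A) (hB : SevenTermRec n a b c d e f g B)
    (hC : SevenTermRec n a b c d e f g C) :
    heptaMatrix n a b c d e f g *ᵥ (fun j : Fin n => det3 A B C ((j : ℤ) + 1) (n + 1) (n + 2)) =
      Pi.single ⟨n - 1, by omega⟩ (-(g n * det3 A B C (n + 3) (n + 1) (n + 2))) := by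
  have hW := det3_mem_heptaSolutions hA hB hC (n + 1) (n + 2)
  funext i
  rw [heptaMatrix_mulVec_apply hW.1 (det3_self_left _ _ _ _ _) (det3_self_right _ _ _ _ _) i,
    sevenTerm, hW.2 _ (by omega) (by omega), Pi.single_apply]
  have hi := i.isLt
  by_cases hlast : (i : ℤ) + 1 = n
  · rw [if_pos hlast, if_pos (by ext; simp; omega), zero_sub]
  · rw [if_neg hlast, if_neg (by rintro rfl; simp at hlast; omega), sub_zero]

end Fundamental

theorem stmt_7 (n : ℕ) (hn : 4 < n) (a b c d e f g A B C : ℤ → ℝ)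
    (hg : ∀ i : ℤ, 1 ≤ i → i ≤ (n : ℤ) - 3 → g i ≠ 0)
    (hg1 : g ((n : ℤ) - 2) = 1) (hg2 : g ((n : ℤ) - 1) = 1) (hg3 : g (n : ℤ) = 1)
    (hA : SevenTermRec n a b c d e f g A) (hA1 : A 1 = 0) (hA2 : A 2 = 0) (hA3 : A 3 = 1)
    (hB : SevenTermRec n a b c d e f g B) (hB1 : B 1 = 0) (hB2 : B 2 = 1) (hB3 : B 3 = 0)
    (hC : SevenTermRec n a b c d e f g C) (hC1 : C 1 = 1) (hC2 : C 2 = 0) (hC3 : C 3 = 0)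
    (hX : det3 A B C ((n : ℤ) + 1) ((n : ℤ) + 2) ((n : ℤ) + 3) ≠ 0) :
    IsUnit (heptaMatrix n a b c d e f g).det ∧
    ∀ i : Fin n,
      (heptaMatrix n a b c d e f g)⁻¹ i ⟨n - 1, by omega⟩ =
        -(det3 A B C ((i : ℤ) + 1) ((n : ℤ) + 1) ((n : ℤ) + 2)) /
          det3 A B C ((n : ℤ) + 3) ((n : ℤ) + 1) ((n : ℤ) + 2) := by
  have hg_ne : ∀ i : ℤ, 1 ≤ i → i ≤ n → g i ≠ 0 := by
    intro i h1 h2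
    obtain h | rfl | rfl | rfl : i ≤ n - 3 ∨ i = n - 2 ∨ i = n - 1 ∨ i = n := by omega
    exacts [hg i h1 h, hg1 ▸ one_ne_zero, hg2 ▸ one_ne_zero, hg3 ▸ one_ne_zero]
  have hdet : IsUnit (heptaMatrix n a b c d e f g).det := isUnit_iff_ne_zero.mpr <|
    heptaMatrix_det_ne_zero hg_ne hA hA1 hA2 hA3 hB hB1 hB2 hB3 hC hC1 hC2 hC3 hX
  have hcol := heptaMatrix_mulVec_det3 (by omega) hA hB hC
  rw [hg3, one_mul] at hcol
  refine ⟨hdet, fun i => ?_⟩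
  have hZ : det3 A B C (n + 3) (n + 1) (n + 2) ≠ 0 := by rwa [det3_rotate]
  rw [eq_div_iff hZ]
  linear_combination -inv_apply_mul_of_mulVec_eq_single hdet hcol i
end

section
/- Let H be an invertible n×n heptadiagonal matrix (n > 4) with diagonals a, b, c, d, e, f, g, g_i ≠ 0 for 1 ≤ i ≤ n-3, and let C_k denote the k-th column of H⁻¹. Then the columns satisfy the backward recurrence: C_{n-3} = (1/g_{n-3})(E_n - d_n C_n - e_{n-1} C_{n-1} - f_{n-2} C_{n-2}), C_{n-4} = (1/g_{n-4})(E_{n-1} - c_n C_n - d_{n-1} C_{n-1} - e_{n-2} C_{n-2} - f_{n-3} C_{n-3}), C_{n-5} = (1/g_{n-5})(E_{n-2} - b_n C_n - c_{n-1} C_{n-1} - d_{n-2} C_{n-2} - e_{n-3} C_{n-3} - f_{n-4} C_{n-4}), and for 1 ≤ j ≤ n-6, C_j = (1/g_j)(E_{j+3} - a_{j+6} C_{j+6} - b_{j+5} C_{j+5} - c_{j+4} C_{j+4} - d_{j+3} C_{j+3} - e_{j+2} C_{j+2} - f_{j+1} C_{j+1}). -/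
open Matrix

section Aux

set_option maxHeartbeats 2000000 in
lemma hepta_split (n : ℕ) (a b c d e f g : ℤ → ℝ) (k col : Fin n) :
    heptaMatrix n a b c d e f g k col =
      (if ((col : ℤ) + 1) = ((k : ℤ) + 1) - 3 then a ((k : ℤ) + 1) else 0)
      + (if ((col : ℤ) + 1) = ((k : ℤ) + 1) - 2 then b ((k : ℤ) + 1) else 0)
      + (if ((col : ℤ) + 1) = ((k : ℤ) + 1) - 1 then c ((k : ℤ) + 1) else 0)
      + (if ((col : ℤ) + 1) = ((k : ℤ) + 1) then d ((k : ℤ) + 1) else 0)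
      + (if ((col : ℤ) + 1) = ((k : ℤ) + 1) + 1 then e ((k : ℤ) + 1) else 0)
      + (if ((col : ℤ) + 1) = ((k : ℤ) + 1) + 2 then f ((k : ℤ) + 1) else 0)
      + (if ((col : ℤ) + 1) = ((k : ℤ) + 1) + 3 then g ((k : ℤ) + 1) else 0) := by
  simp only [heptaMatrix]
  split_ifs <;> first | (exfalso; omega) | ring

lemma sum_ite_mul (n : ℕ) (A : Matrix (Fin n) (Fin n) ℝ) (i : Fin n) (t : ℤ → ℝ) (m : ℤ) :
    (∑ k : Fin n, if (k : ℤ) = m - 1 then A i k * t ((k : ℤ) + 1) else 0)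
      = t m * matCol n A m i := by
  by_cases h : 1 ≤ m ∧ m ≤ (n : ℤ)
  · obtain ⟨h1, h2⟩ := h
    have hk : (m - 1).toNat < n := by omega
    rw [Finset.sum_eq_single (⟨(m - 1).toNat, hk⟩ : Fin n)]
    · have hc : (((⟨(m - 1).toNat, hk⟩ : Fin n) : ℕ) : ℤ) = m - 1 := by
        simp; omega
      rw [if_pos hc, hc]
      simp only [matCol, dif_pos (And.intro h1 h2)]
      rw [sub_add_cancel]
      ring
    · intro b _ hb
      rw [if_neg]
      intro hbeq
      exact hb (Fin.ext (show (b : ℕ) = (m - 1).toNat by omega))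
    · intro habs; exact absurd (Finset.mem_univ _) habs
  · simp only [matCol, dif_neg h, mul_zero]
    apply Finset.sum_eq_zero
    intro k _
    rw [if_neg]
    have := k.isLt
    omega

lemma matCol_oob (n : ℕ) (A : Matrix (Fin n) (Fin n) ℝ) (k : ℤ)
    (h : ¬(1 ≤ k ∧ k ≤ (n : ℤ))) (i : Fin n) : matCol n A k i = 0 := by
  simp only [matCol, dif_neg h]

lemma key_rec (n : ℕ) (a b c d e f g : ℤ → ℝ) (A : Matrix (Fin n) (Fin n) ℝ)
    (hA : A * heptaMatrix n a b c d e f g = 1) (m : ℤ) (h1 : 1 ≤ m) (h2 : m ≤ (n : ℤ))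
    (i : Fin n) :
    g (m - 3) * matCol n A (m - 3) i + f (m - 2) * matCol n A (m - 2) i
      + e (m - 1) * matCol n A (m - 1) i + d m * matCol n A m i
      + c (m + 1) * matCol n A (m + 1) i + b (m + 2) * matCol n A (m + 2) i
      + a (m + 3) * matCol n A (m + 3) i = stdBasis n m i := by
  have hk : (m - 1).toNat < n := by omega
  obtain ⟨col, hM⟩ : ∃ col : Fin n, ((col : ℤ)) + 1 = m :=
    ⟨⟨(m - 1).toNat, hk⟩, by show (((m - 1).toNat : ℕ) : ℤ) + 1 = m; omega⟩
  have h := congrFun (congrFun hA i) col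
  rw [Matrix.mul_apply, Matrix.one_apply] at h
  have hsplit : ∀ k : Fin n, heptaMatrix n a b c d e f g k col =
      (if m = ((k : ℤ) + 1) - 3 then a ((k : ℤ) + 1) else 0)
      + (if m = ((k : ℤ) + 1) - 2 then b ((k : ℤ) + 1) else 0)
      + (if m = ((k : ℤ) + 1) - 1 then c ((k : ℤ) + 1) else 0)
      + (if m = ((k : ℤ) + 1) then d ((k : ℤ) + 1) else 0)
      + (if m = ((k : ℤ) + 1) + 1 then e ((k : ℤ) + 1) else 0)
      + (if m = ((k : ℤ) + 1) + 2 then f ((k : ℤ) + 1) else 0)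
      + (if m = ((k : ℤ) + 1) + 3 then g ((k : ℤ) + 1) else 0) := by
    intro k
    rw [hepta_split n a b c d e f g k col, hM]
  have P1 : ∀ x : ℤ, (m = x + 1 - 3) = (x = m + 3 - 1) := fun x => propext (by omega)
  have P2 : ∀ x : ℤ, (m = x + 1 - 2) = (x = m + 2 - 1) := fun x => propext (by omega)
  have P3 : ∀ x : ℤ, (m = x + 1 - 1) = (x = m + 1 - 1) := fun x => propext (by omega)
  have P4 : ∀ x : ℤ, (m = x + 1) = (x = m - 1) := fun x => propext (by omega)
  have P5 : ∀ x : ℤ, (m = x + 1 + 1) = (x = m - 1 - 1) := fun x => propext (by omega)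
  have P6 : ∀ x : ℤ, (m = x + 1 + 2) = (x = m - 2 - 1) := fun x => propext (by omega)
  have P7 : ∀ x : ℤ, (m = x + 1 + 3) = (x = m - 3 - 1) := fun x => propext (by omega)
  simp only [hsplit, P1, P2, P3, P5, P6, P7, mul_add, mul_ite, mul_zero,
    Finset.sum_add_distrib] at h
  simp only [P4] at h
  rw [sum_ite_mul n A i a (m + 3), sum_ite_mul n A i b (m + 2), sum_ite_mul n A i c (m + 1),
    sum_ite_mul n A i d m, sum_ite_mul n A i e (m - 1), sum_ite_mul n A i f (m - 2),
    sum_ite_mul n A i g (m - 3)] at h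
  have hstd : stdBasis n m i = if i = col then 1 else 0 := by
    simp only [_root_.stdBasis]
    by_cases hi : i = col
    · subst hi; rw [if_pos hM, if_pos rfl]
    · rw [if_neg hi, if_neg]
      intro hic
      exact hi (Fin.ext (by omega))
  rw [hstd]
  linarith [h]

lemma solve_aux (gv X E : ℝ) (hE : gv * X = E) (h : gv ≠ 0 ∨ X = 0) : X = gv⁻¹ * E := by
  rcases h with h | h
  · rw [← hE, inv_mul_cancel_left₀ h]
  · rw [h, ← hE, h, mul_zero, mul_zero]

end Aux

theorem stmt_9 (n : ℕ) (hn : 4 < n) (a b c d e f g : ℤ → ℝ)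
    (hg : ∀ i : ℤ, 1 ≤ i → i ≤ (n : ℤ) - 3 → g i ≠ 0)
    (hH : IsUnit (heptaMatrix n a b c d e f g).det) :
    (matCol n (heptaMatrix n a b c d e f g)⁻¹ ((n : ℤ) - 3) =
      (g ((n : ℤ) - 3))⁻¹ •
        (stdBasis n (n : ℤ)
          - d (n : ℤ) • matCol n (heptaMatrix n a b c d e f g)⁻¹ (n : ℤ)
          - e ((n : ℤ) - 1) • matCol n (heptaMatrix n a b c d e f g)⁻¹ ((n : ℤ) - 1)
          - f ((n : ℤ) - 2) • matCol n (heptaMatrix n a b c d e f g)⁻¹ ((n : ℤ) - 2))) ∧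
    (matCol n (heptaMatrix n a b c d e f g)⁻¹ ((n : ℤ) - 4) =
      (g ((n : ℤ) - 4))⁻¹ •
        (stdBasis n ((n : ℤ) - 1)
          - c (n : ℤ) • matCol n (heptaMatrix n a b c d e f g)⁻¹ (n : ℤ)
          - d ((n : ℤ) - 1) • matCol n (heptaMatrix n a b c d e f g)⁻¹ ((n : ℤ) - 1)
          - e ((n : ℤ) - 2) • matCol n (heptaMatrix n a b c d e f g)⁻¹ ((n : ℤ) - 2)
          - f ((n : ℤ) - 3) • matCol n (heptaMatrix n a b c d e f g)⁻¹ ((n : ℤ) - 3))) ∧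
    (matCol n (heptaMatrix n a b c d e f g)⁻¹ ((n : ℤ) - 5) =
      (g ((n : ℤ) - 5))⁻¹ •
        (stdBasis n ((n : ℤ) - 2)
          - b (n : ℤ) • matCol n (heptaMatrix n a b c d e f g)⁻¹ (n : ℤ)
          - c ((n : ℤ) - 1) • matCol n (heptaMatrix n a b c d e f g)⁻¹ ((n : ℤ) - 1)
          - d ((n : ℤ) - 2) • matCol n (heptaMatrix n a b c d e f g)⁻¹ ((n : ℤ) - 2)
          - e ((n : ℤ) - 3) • matCol n (heptaMatrix n a b c d e f g)⁻¹ ((n : ℤ) - 3)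
          - f ((n : ℤ) - 4) • matCol n (heptaMatrix n a b c d e f g)⁻¹ ((n : ℤ) - 4))) ∧
    (∀ j : ℤ, 1 ≤ j → j ≤ (n : ℤ) - 6 →
      matCol n (heptaMatrix n a b c d e f g)⁻¹ j =
        (g j)⁻¹ •
          (stdBasis n (j + 3)
            - a (j + 6) • matCol n (heptaMatrix n a b c d e f g)⁻¹ (j + 6)
            - b (j + 5) • matCol n (heptaMatrix n a b c d e f g)⁻¹ (j + 5)
            - c (j + 4) • matCol n (heptaMatrix n a b c d e f g)⁻¹ (j + 4)
            - d (j + 3) • matCol n (heptaMatrix n a b c d e f g)⁻¹ (j + 3)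
            - e (j + 2) • matCol n (heptaMatrix n a b c d e f g)⁻¹ (j + 2)
            - f (j + 1) • matCol n (heptaMatrix n a b c d e f g)⁻¹ (j + 1))) := by
  set A := (heptaMatrix n a b c d e f g)⁻¹ with hAdef
  have hA : A * heptaMatrix n a b c d e f g = 1 := Matrix.nonsing_inv_mul _ hH
  refine ⟨?_, ?_, ?_, ?_⟩
  · funext i
    simp only [Pi.smul_apply, Pi.sub_apply, smul_eq_mul]
    have hkey := key_rec n a b c d e f g A hA (n : ℤ) (by omega) le_rfl i
    rw [matCol_oob n A ((n : ℤ) + 1) (by omega) i,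
        matCol_oob n A ((n : ℤ) + 2) (by omega) i,
        matCol_oob n A ((n : ℤ) + 3) (by omega) i] at hkey
    exact solve_aux _ _ _ (by linarith [hkey]) (Or.inl (hg _ (by omega) (by omega)))
  · funext i
    simp only [Pi.smul_apply, Pi.sub_apply, smul_eq_mul]
    have hkey := key_rec n a b c d e f g A hA ((n : ℤ) - 1) (by omega) (by omega) i
    simp only [show (n : ℤ) - 1 - 3 = (n : ℤ) - 4 by ring,
      show (n : ℤ) - 1 - 2 = (n : ℤ) - 3 by ring,
      show (n : ℤ) - 1 - 1 = (n : ℤ) - 2 by ring,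
      show (n : ℤ) - 1 + 1 = (n : ℤ) by ring,
      show (n : ℤ) - 1 + 2 = (n : ℤ) + 1 by ring,
      show (n : ℤ) - 1 + 3 = (n : ℤ) + 2 by ring] at hkey
    rw [matCol_oob n A ((n : ℤ) + 1) (by omega) i,
        matCol_oob n A ((n : ℤ) + 2) (by omega) i] at hkey
    exact solve_aux _ _ _ (by linarith [hkey]) (Or.inl (hg _ (by omega) (by omega)))
  · funext i
    simp only [Pi.smul_apply, Pi.sub_apply, smul_eq_mul]
    have hkey := key_rec n a b c d e f g A hA ((n : ℤ) - 2) (by omega) (by omega) i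
    simp only [show (n : ℤ) - 2 - 3 = (n : ℤ) - 5 by ring,
      show (n : ℤ) - 2 - 2 = (n : ℤ) - 4 by ring,
      show (n : ℤ) - 2 - 1 = (n : ℤ) - 3 by ring,
      show (n : ℤ) - 2 + 1 = (n : ℤ) - 1 by ring,
      show (n : ℤ) - 2 + 2 = (n : ℤ) by ring,
      show (n : ℤ) - 2 + 3 = (n : ℤ) + 1 by ring] at hkey
    rw [matCol_oob n A ((n : ℤ) + 1) (by omega) i] at hkey
    by_cases h6 : 6 ≤ (n : ℤ)
    · exact solve_aux _ _ _ (by linarith [hkey]) (Or.inl (hg _ (by omega) (by omega)))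
    · exact solve_aux _ _ _ (by linarith [hkey])
        (Or.inr (matCol_oob n A ((n : ℤ) - 5) (by omega) i))
  · intro j hj1 hj2
    funext i
    simp only [Pi.smul_apply, Pi.sub_apply, smul_eq_mul]
    have hkey := key_rec n a b c d e f g A hA (j + 3) (by omega) (by omega) i
    simp only [show j + 3 - 3 = j by ring,
      show j + 3 - 2 = j + 1 by ring,
      show j + 3 - 1 = j + 2 by ring,
      show j + 3 + 1 = j + 4 by ring,
      show j + 3 + 2 = j + 5 by ring,
      show j + 3 + 3 = j + 6 by ring] at hkey
    exact solve_aux _ _ _ (by linarith [hkey]) (Or.inl (hg _ (by omega) (by omega)))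
end
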